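/- Let N ≥ 1, let θ_1,…,θ_N, φ_1,…,φ_N ∈ ℝ, let A = ⊗_{l=1}^N A(θ_l, φ_l) and B = σ_Z^{⊗N}, and let M = {m ∈ {0,1}^N : sin((Σ_{l=1}^N (−1)^{m_l} θ_l)/2) = 0}. Then every vector ψ ∈ ℂ^{2^N} with Aψ = ψ and Bψ = ψ lies in the linear span of the vectors G_m := Σ_{j ∈ S_0} (∏_{l=1}^N (i·e^{iφ_l}·(−1)^{m_l})^{j_l}) |j⟩ for m ∈ M, where i is the imaginary unit. -/

import Mathlib

/-!
With `u_b = (1, (-1)^b i e^{iφ})`, every `A(θ, φ)` maps `u_b` to `e^{±iθ} u_{1-b}`, and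
`σ_Z = A(0, φ)`. In the product basis `u_m`, both `A` and `B` therefore flip all bits of `m`,
`A` with the phase `exp(i Σ_l (-1)^{m_l} θ_l)` and `B` without one. The coordinates `c` of a
common fixed vector thus satisfy `c_{m̄} = c_m = exp(i Σ_l (-1)^{m_l} θ_l) c_m`, so `c_m ≠ 0`
forces `m ∈ M`. Finally the `j`-th entry of `u_{m̄}` is `(-1)^{|j|}` times that of `u_m`, so the
flip-symmetric vector `Σ c_m u_m` vanishes off `S_0`, where `u_m` agrees with `G_m`.
-/

open Matrix Finset

/-- Tensor product of `N` 2×2 complex matrices, indexed by bit strings. -/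
noncomputable def tensorN {N : ℕ} (M : Fin N → Matrix (Fin 2) (Fin 2) ℂ) :
    Matrix (Fin N → Fin 2) (Fin N → Fin 2) ℂ :=
  fun i j => ∏ l, M l (i l) (j l)

/-- The spin observable `A(θ,φ)`. -/
noncomputable def spinA (θ φ : ℝ) : Matrix (Fin 2) (Fin 2) ℂ :=
  !![(Real.cos θ : ℂ), Complex.exp (-(φ : ℂ) * Complex.I) * (Real.sin θ : ℂ);
     Complex.exp ((φ : ℂ) * Complex.I) * (Real.sin θ : ℂ), -(Real.cos θ : ℂ)]

/-- The Pauli matrix `σ_Z`. -/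
def sigmaZ : Matrix (Fin 2) (Fin 2) ℂ := !![1, 0; 0, -1]

/-- The vector `G_m = Σ_{j ∈ S_0} (∏_l (i e^{iφ_l} (−1)^{m_l})^{j_l}) |j⟩`. -/
noncomputable def Gvec (N : ℕ) (φ : Fin N → ℝ) (m : Fin N → Fin 2) :
    (Fin N → Fin 2) → ℂ :=
  fun j => if Even (∑ l, (j l : ℕ)) then
    ∏ l, (Complex.I * Complex.exp ((φ l : ℂ) * Complex.I) * (-1 : ℂ) ^ (m l : ℕ)) ^ (j l : ℕ)
  else 0

open Complex

lemma tensorN_mul {N : ℕ} (M M' : Fin N → Matrix (Fin 2) (Fin 2) ℂ) :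
    tensorN M * tensorN M' = tensorN fun l => M l * M' l := by
  ext i k
  simp only [tensorN, mul_apply, ← prod_mul_distrib]
  exact (Fintype.prod_sum fun l b => M l (i l) b * M' l b (k l)).symm

lemma tensorN_one {N : ℕ} : tensorN (fun _ : Fin N => (1 : Matrix (Fin 2) (Fin 2) ℂ)) = 1 := by
  ext i j
  simp only [tensorN, one_apply, Fintype.prod_boole, funext_iff]
  congr

def flipv {N : ℕ} (m : Fin N → Fin 2) : Fin N → Fin 2 := fun l => m l + 1

lemma flipv_involutive {N : ℕ} : Function.Involutive (flipv (N := N)) := fun m => by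
  funext l
  exact (by decide : ∀ b : Fin 2, b + 1 + 1 = b) (m l)

lemma neg_one_pow_val_add_one (b : Fin 2) {R : Type*} [Ring R] :
    (-1 : R) ^ ((b + 1 : Fin 2) : ℕ) = -(-1) ^ (b : ℕ) := by
  fin_cases b <;> simp

noncomputable def flipBasis (φ : ℝ) : Matrix (Fin 2) (Fin 2) ℂ :=
  of fun a b => (I * cexp (φ * I) * (-1) ^ (b : ℕ)) ^ (a : ℕ)

noncomputable def flipBasisInv (φ : ℝ) : Matrix (Fin 2) (Fin 2) ℂ :=
  !![1 / 2, -I * cexp (-φ * I) / 2; 1 / 2, I * cexp (-φ * I) / 2]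

/-- `!![0, e^{-iθ}; e^{iθ}, 0]`, written so that its tensor powers are easy to evaluate. -/
noncomputable def phaseFlip (θ : ℝ) : Matrix (Fin 2) (Fin 2) ℂ :=
  of fun a b => if b = a + 1 then cexp (((-1) ^ (b : ℕ) * θ : ℝ) * I) else 0

lemma flipBasis_mul_inv (φ : ℝ) : flipBasis φ * flipBasisInv φ = 1 := by
  have hφ : cexp (φ * I) * cexp (-(φ * I)) = 1 := by rw [← exp_add]; simp
  ext a b
  fin_cases a <;> fin_cases b <;>
    simp [flipBasis, flipBasisInv, mul_apply, Fin.sum_univ_two]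
  · ring
  · ring
  · linear_combination hφ - cexp (φ * I) * cexp (-(φ * I)) * I_sq

lemma spinA_mul_flipBasis (θ φ : ℝ) :
    spinA θ φ * flipBasis φ = flipBasis φ * phaseFlip θ := by
  have hφ : cexp (-(φ * I)) * cexp (φ * I) = 1 := by rw [← exp_add]; simp
  have hθ := exp_mul_I θ
  have hθ' : cexp (-(θ * I)) = cos θ - sin θ * I := by
    rw [← neg_mul, exp_mul_I, cos_neg, sin_neg]; ring
  ext a b
  fin_cases a <;> fin_cases b <;>
    simp [spinA, flipBasis, phaseFlip, mul_apply, Fin.sum_univ_two]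
  · linear_combination sin θ * I * hφ - hθ
  · linear_combination -(sin θ * I) * hφ - hθ'
  · linear_combination I * cexp (φ * I) * hθ + cexp (φ * I) * sin θ * I_sq
  · linear_combination -(I * cexp (φ * I)) * hθ' + cexp (φ * I) * sin θ * I_sq

lemma sigmaZ_eq_spinA_zero (φ : ℝ) : sigmaZ = spinA 0 φ := by
  ext a b
  fin_cases a <;> fin_cases b <;> simp [sigmaZ, spinA]

lemma tensorN_phaseFlip_flipv_apply {N : ℕ} (θ : Fin N → ℝ) (m m' : Fin N → Fin 2) :
    tensorN (fun l => phaseFlip (θ l)) (flipv m) m' =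
      if m' = m then cexp ((∑ l, (-1) ^ (m l : ℕ) * θ l : ℝ) * I) else 0 := by
  have hflip : ∀ b : Fin 2, b + 1 + 1 = b := by decide
  simp only [tensorN, phaseFlip, of_apply, flipv, hflip, Fintype.prod_ite_zero, ← funext_iff]
  split_ifs with h
  · subst h
    rw [← exp_sum, ofReal_sum, sum_mul]
  · rfl

lemma tensorN_phaseFlip_mulVec_flipv {N : ℕ} (θ : Fin N → ℝ) (d : (Fin N → Fin 2) → ℂ)
    (m : Fin N → Fin 2) :
    (tensorN (fun l => phaseFlip (θ l)) *ᵥ d) (flipv m) =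
      cexp ((∑ l, (-1) ^ (m l : ℕ) * θ l : ℝ) * I) * d m := by
  simp [mulVec, dotProduct, tensorN_phaseFlip_flipv_apply]

lemma tensorN_flipBasis_flipv_apply {N : ℕ} (φ : Fin N → ℝ) (j m : Fin N → Fin 2) :
    tensorN (fun l => flipBasis (φ l)) j (flipv m) =
      (-1) ^ (∑ l, (j l : ℕ)) * tensorN (fun l => flipBasis (φ l)) j m := by
  simp only [tensorN, flipBasis, of_apply, flipv, neg_one_pow_val_add_one, ← prod_pow_eq_pow_sum,
    ← prod_mul_distrib, ← mul_pow]
  congr! 2 with l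
  ring

lemma mulVec_mulVec_eq_self_of_mul_eq_mul {n R : Type*} [Fintype n] [DecidableEq n] [CommRing R]
    {A K V W : Matrix n n R} (hVW : V * W = 1) (hAV : A * V = V * K) {ψ : n → R}
    (hψ : A *ᵥ ψ = ψ) : K *ᵥ (W *ᵥ ψ) = W *ᵥ ψ := by
  have hWV : W * V = 1 := mul_eq_one_comm.mp hVW
  have hK : K = W * A * V := by rw [mul_assoc, hAV, ← mul_assoc, hWV, one_mul]
  rw [hK, mulVec_mulVec, mul_assoc, mul_assoc, hVW, mul_one, ← mulVec_mulVec, hψ]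

noncomputable def flipBasisCoords {N : ℕ} (φ : Fin N → ℝ) (ψ : (Fin N → Fin 2) → ℂ) :
    (Fin N → Fin 2) → ℂ :=
  tensorN (fun l => flipBasisInv (φ l)) *ᵥ ψ

lemma tensorN_flipBasis_mul_inv {N : ℕ} (φ : Fin N → ℝ) :
    tensorN (fun l => flipBasis (φ l)) * tensorN (fun l => flipBasisInv (φ l)) = 1 := by
  simp only [tensorN_mul, flipBasis_mul_inv, tensorN_one]

lemma tensorN_flipBasis_mulVec_flipBasisCoords {N : ℕ} (φ : Fin N → ℝ)
    (ψ : (Fin N → Fin 2) → ℂ) :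
    tensorN (fun l => flipBasis (φ l)) *ᵥ flipBasisCoords φ ψ = ψ := by
  rw [flipBasisCoords, mulVec_mulVec, tensorN_flipBasis_mul_inv, one_mulVec]

lemma flipBasisCoords_flipv {N : ℕ} (θ φ : Fin N → ℝ) (ψ : (Fin N → Fin 2) → ℂ)
    (hψ : tensorN (fun l => spinA (θ l) (φ l)) *ᵥ ψ = ψ) (m : Fin N → Fin 2) :
    flipBasisCoords φ ψ (flipv m) =
      cexp ((∑ l, (-1) ^ (m l : ℕ) * θ l : ℝ) * I) * flipBasisCoords φ ψ m := by
  have hconj : tensorN (fun l => spinA (θ l) (φ l)) * tensorN (fun l => flipBasis (φ l)) =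
      tensorN (fun l => flipBasis (φ l)) * tensorN (fun l => phaseFlip (θ l)) := by
    simp only [tensorN_mul, spinA_mul_flipBasis]
  rw [← tensorN_phaseFlip_mulVec_flipv, flipBasisCoords,
    mulVec_mulVec_eq_self_of_mul_eq_mul (tensorN_flipBasis_mul_inv φ) hconj hψ]

lemma sum_eq_zero_of_involutive_of_comp_eq_neg {α G : Type*} [Fintype α] [AddCommGroup G]
    [IsAddTorsionFree G] {σ : α → α} (hσ : Function.Involutive σ) {f : α → G}
    (hf : ∀ a, f (σ a) = -f a) : ∑ a, f a = 0 := by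
  have h := Equiv.sum_comp (hσ.toPerm σ) f
  simp only [Function.Involutive.coe_toPerm, hf, sum_neg_distrib] at h
  exact self_eq_neg.mp h.symm

lemma tensorN_flipBasis_mulVec_eq_sum_smul_Gvec {N : ℕ} (φ : Fin N → ℝ)
    {d : (Fin N → Fin 2) → ℂ} (hd : ∀ m, d (flipv m) = d m) :
    tensorN (fun l => flipBasis (φ l)) *ᵥ d = ∑ m, d m • Gvec N φ m := by
  ext j
  simp only [mulVec, dotProduct, Finset.sum_apply, Pi.smul_apply, smul_eq_mul, Gvec]
  split_ifs with hj
  · exact sum_congr rfl fun m _ => by rw [mul_comm]; rfl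
  · simp only [mul_zero, sum_const_zero]
    refine sum_eq_zero_of_involutive_of_comp_eq_neg flipv_involutive fun m => ?_
    rw [hd, tensorN_flipBasis_flipv_apply, (Nat.not_even_iff_odd.mp hj).neg_one_pow]
    ring

lemma Real.sin_half_eq_zero_of_exp_mul_I_eq_one {x : ℝ} (h : cexp (x * I) = 1) :
    Real.sin (x / 2) = 0 := by
  obtain ⟨n, rfl⟩ := (Real.cos_eq_one_iff x).mp (by simpa using congrArg re h)
  rw [show n * (2 * Real.pi) / 2 = n * Real.pi by ring]
  exact Real.sin_int_mul_pi n

theorem stmt3_general (N : ℕ) (θ φ : Fin N → ℝ) (ψ : (Fin N → Fin 2) → ℂ)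
    (hA : (tensorN (fun l => spinA (θ l) (φ l))).mulVec ψ = ψ)
    (hB : (tensorN (fun _ => sigmaZ)).mulVec ψ = ψ) :
    ψ ∈ Submodule.span ℂ
      (Gvec N φ '' {m : Fin N → Fin 2 |
        Real.sin ((∑ l, (-1 : ℝ) ^ (m l : ℕ) * θ l) / 2) = 0}) := by
  set d := flipBasisCoords φ ψ
  have hflip (m) : d (flipv m) = d m := by
    rw [show (fun _ => sigmaZ) = fun l => spinA ((0 : Fin N → ℝ) l) (φ l) from
      funext fun l => sigmaZ_eq_spinA_zero (φ l)] at hB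
    simpa using flipBasisCoords_flipv 0 φ ψ hB m
  have hsupp (m) (hm : d m ≠ 0) :
      Real.sin ((∑ l, (-1 : ℝ) ^ (m l : ℕ) * θ l) / 2) = 0 := by
    refine Real.sin_half_eq_zero_of_exp_mul_I_eq_one (mul_left_eq_self₀.mp ?_ |>.resolve_right hm)
    rw [← flipBasisCoords_flipv θ φ ψ hA]
    exact hflip m
  rw [← tensorN_flipBasis_mulVec_flipBasisCoords φ ψ,
    tensorN_flipBasis_mulVec_eq_sum_smul_Gvec φ hflip]
  refine Submodule.sum_mem _ fun m _ => ?_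
  by_cases hm : d m = 0
  · simp [hm]
  · exact Submodule.smul_mem _ _ (Submodule.subset_span ⟨m, hsupp m hm, rfl⟩)

theorem stmt3 (N : ℕ) (hN : 1 ≤ N) (θ φ : Fin N → ℝ) (ψ : (Fin N → Fin 2) → ℂ)
    (hA : (tensorN (fun l => spinA (θ l) (φ l))).mulVec ψ = ψ)
    (hB : (tensorN (fun _ => sigmaZ)).mulVec ψ = ψ) :
    ψ ∈ Submodule.span ℂ
      (Gvec N φ '' {m : Fin N → Fin 2 |
        Real.sin ((∑ l, (-1 : ℝ) ^ (m l : ℕ) * θ l) / 2) = 0}) :=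
  stmt3_general N θ φ ψ hA hB
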